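/- Let a and b be integers with a ≥ 2, b ≥ a + 2, and gcd(a,b) = 1. Then the hats-nim game graph G(hats,{a,b}) has metric dimension 3 with respect to signed distance; in particular, no set of two vertices resolves it. -/

import Mathlib

/-- `StepsTo R m u v` : there is a directed walk of length `m` from `u` to `v`. -/
def StepsTo {V : Type*} (R : V → V → Prop) : ℕ → V → V → Prop
  | 0 => fun u v => u = v
  | (m + 1) => fun u v => ∃ w, R u w ∧ StepsTo R m w v

/-- Directed distance: length of a shortest directed path (`⊤` = ∞ if none exists). -/
noncomputable def ddist {V : Type*} (R : V → V → Prop) (u v : V) : ℕ∞ :=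
  sInf ((fun m : ℕ => (m : ℕ∞)) '' {m : ℕ | StepsTo R m u v})

/-- Signed distance `d±(u,v)`: `d(u,v)` if a `u→v` path exists and `d(u,v) ≤ d(v,u)`;
`-d(v,u)` if a `v→u` path exists and `d(v,u) < d(u,v)`; `⊤` if neither path exists. -/
noncomputable def sdist {V : Type*} (R : V → V → Prop) (u v : V) : WithTop ℤ :=
  if ddist R u v ≤ ddist R v u then (ddist R u v).map (fun m : ℕ => (m : ℤ))
  else (ddist R v u).map (fun m : ℕ => (-(m : ℤ)))

/-- `S` resolves the digraph with arc relation `R` (w.r.t. signed distance). -/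
def Resolves {V : Type*} (R : V → V → Prop) (S : Set V) : Prop :=
  ∀ u v : V, (∀ s ∈ S, sdist R s u = sdist R s v) → u = v

/-- Metric dimension of the digraph with arc relation `R` (w.r.t. signed distance). -/
noncomputable def metricDim {V : Type*} (R : V → V → Prop) : ℕ :=
  sInf {k : ℕ | ∃ S : Finset V, S.card = k ∧ Resolves R ↑S}

/-- A hats-nim move: pick a heap `h ∈ s` and a subtraction amount `k ∈ s` with `k ≤ h`,
and replace the heap `h` by `h - k`, deleting it if `h - k = 0`. -/
def HatsMove (s t : Multiset ℕ) : Prop :=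
  ∃ h ∈ s, ∃ k ∈ s, k ≤ h ∧
    t = (if k < h then (h - k) ::ₘ s.erase h else s.erase h)

/-- Vertices of `G(hats,{a,b})`: all positions reachable from `{a,b}`. -/
def HatsV (a b : ℕ) : Type :=
  {s : Multiset ℕ // Relation.ReflTransGen HatsMove {a, b} s}

/-- The arc relation of the hats-nim game graph `G(hats,{a,b})`. -/
def hatsR (a b : ℕ) (u v : HatsV a b) : Prop := HatsMove u.1 v.1

section Generic
variable {V : Type*} {R : V → V → Prop} {u v w : V} {m n : ℕ}

lemma stepsTo_zero : StepsTo R 0 u v ↔ u = v := Iff.rfl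

lemma stepsTo_succ : StepsTo R (m+1) u v ↔ ∃ w, R u w ∧ StepsTo R m w v := Iff.rfl

lemma StepsTo.snoc (h : StepsTo R m u w) (h2 : R w v) : StepsTo R (m+1) u v := by
  induction m generalizing u with
  | zero => exact ⟨v, h ▸ h2, rfl⟩
  | succ n ih => obtain ⟨x, hx, hs⟩ := h; exact ⟨x, hx, ih hs⟩

lemma ddist_le (h : StepsTo R m u v) : ddist R u v ≤ m := sInf_le ⟨m, h, rfl⟩

lemma ddist_eq (h : StepsTo R m u v) (hmin : ∀ k, StepsTo R k u v → m ≤ k) :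
    ddist R u v = m := by
  refine le_antisymm (ddist_le h) (le_sInf ?_)
  rintro x ⟨k, hk, rfl⟩
  simp only []
  exact_mod_cast hmin k hk

lemma ddist_eq_top (h : ∀ m, ¬ StepsTo R m u v) : ddist R u v = ⊤ := by
  rw [ddist]
  refine (congrArg sInf (?_ : _ = (∅ : Set ℕ∞))).trans sInf_empty
  ext x
  simp only [Set.mem_image, Set.mem_setOf_eq, Set.mem_empty_iff_false, iff_false, not_exists]
  exact fun m hm => absurd hm.1 (h m)

lemma ddist_self : ddist R u u = 0 := by
  refine le_antisymm ?_ zero_le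
  exact ddist_le (m := 0) rfl

lemma sdist_self : sdist R u u = (0 : ℤ) := by
  simp [sdist, ddist_self]

lemma sdist_of_le (h1 : ddist R u v = m) (h2 : (m : ℕ∞) ≤ ddist R v u) :
    sdist R u v = (m : ℤ) := by
  rw [sdist, if_pos (h1 ▸ h2), h1]; rfl

lemma sdist_of_rev (h1 : ddist R u v = ⊤) (h2 : ddist R v u = m) :
    sdist R u v = ((-(m : ℤ) : ℤ)) := by
  rw [sdist, if_neg, h2]
  · rfl
  · rw [h1, h2]
    simp [top_le_iff]

lemma sdist_top (h1 : ddist R u v = ⊤) (h2 : ddist R v u = ⊤) : sdist R u v = ⊤ := by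
  rw [sdist, if_pos (by rw [h1, h2]), h1]; rfl

end Generic

section Transfer
variable {a b : ℕ}

lemma stepsTo_hatsR_iff {m : ℕ} {u v : HatsV a b} :
    StepsTo (hatsR a b) m u v ↔ StepsTo HatsMove m u.1 v.1 := by
  constructor
  · intro h
    induction m generalizing u with
    | zero => rw [stepsTo_zero] at *; rw [h]
    | succ n ih => obtain ⟨w, hw, hs⟩ := h; exact ⟨w.1, hw, ih hs⟩
  · intro h
    induction m generalizing u with
    | zero => rw [stepsTo_zero] at *; exact Subtype.ext h
    | succ n ih =>
      obtain ⟨w, hw, hs⟩ := h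
      exact ⟨⟨w, u.2.tail hw⟩, hw, ih hs⟩

lemma ddist_hatsR {u v : HatsV a b} : ddist (hatsR a b) u v = ddist HatsMove u.1 v.1 := by
  unfold ddist
  congr 1
  ext x
  simp only [Set.mem_image, Set.mem_setOf_eq]
  exact exists_congr fun m => and_congr_left fun _ => stepsTo_hatsR_iff

lemma sdist_hatsR {u v : HatsV a b} : sdist (hatsR a b) u v = sdist HatsMove u.1 v.1 := by
  unfold sdist
  rw [ddist_hatsR, ddist_hatsR]

end Transfer


section Moves

lemma move_zero {t : Multiset ℕ} : ¬ HatsMove 0 t := by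
  rintro ⟨h, hh, -⟩
  simp at hh

lemma move_single {z : ℕ} {t : Multiset ℕ} : HatsMove {z} t ↔ t = 0 := by
  constructor
  · rintro ⟨h, hh, k, hk, hkh, rfl⟩
    simp only [Multiset.mem_singleton] at hh hk
    subst hh; subst hk
    simp
  · rintro rfl
    exact ⟨z, by simp, z, by simp, le_refl _, by simp⟩

lemma pair_comm (x y : ℕ) : ({x, y} : Multiset ℕ) = {y, x} := by
  simp only [Multiset.insert_eq_cons]
  exact Multiset.cons_swap x y {}

lemma erase_pair_left (x y : ℕ) : ({x, y} : Multiset ℕ).erase x = {y} := by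
  rw [Multiset.insert_eq_cons, Multiset.erase_cons_head]

lemma erase_pair_right (x y : ℕ) : ({x, y} : Multiset ℕ).erase y = {x} := by
  rw [pair_comm, erase_pair_left]

lemma move_pair {x y : ℕ} (hxy : x ≤ y) {t : Multiset ℕ} :
    HatsMove {x, y} t ↔ (t = {y} ∨ t = {x} ∨ (x < y ∧ t = {x, y - x})) := by
  have hmem : ∀ z : ℕ, z ∈ ({x, y} : Multiset ℕ) ↔ z = x ∨ z = y := by
    intro z; simp
  constructor
  · rintro ⟨h, hh, k, hk, hkh, ht⟩
    rw [hmem] at hh hk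
    rcases hh with rfl | rfl
    · -- heap h = x, k ≤ x
      have hkx : k = h := by
        rcases hk with rfl | rfl
        · rfl
        · exact le_antisymm hkh hxy
      subst hkx
      rw [if_neg (lt_irrefl _), erase_pair_left] at ht
      exact Or.inl ht
    · -- heap h = y
      rcases hk with rfl | rfl
      · rcases eq_or_lt_of_le hxy with rfl | hlt
        · rw [if_neg (lt_irrefl _), erase_pair_right] at ht
          exact Or.inr (Or.inl ht)
        · rw [if_pos hlt, erase_pair_right] at ht
          refine Or.inr (Or.inr ⟨hlt, ?_⟩)
          rw [ht, pair_comm, Multiset.insert_eq_cons]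
      · rw [if_neg (lt_irrefl _), erase_pair_right] at ht
        exact Or.inr (Or.inl ht)
  · rintro (rfl | rfl | ⟨hlt, rfl⟩)
    · refine ⟨x, by simp, x, by simp, le_refl _, ?_⟩
      rw [if_neg (lt_irrefl _), erase_pair_left]
    · refine ⟨y, by simp, y, by simp, le_refl _, ?_⟩
      rw [if_neg (lt_irrefl _), erase_pair_right]
    · refine ⟨y, by simp, x, by simp, hxy, ?_⟩
      rw [if_pos hlt, erase_pair_right, pair_comm, Multiset.insert_eq_cons]

lemma move_card {s t : Multiset ℕ} (h : HatsMove s t) : t.card ≤ s.card := by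
  obtain ⟨h', hh, k, hk, hkh, rfl⟩ := h
  have hc := Multiset.card_erase_of_mem hh
  have hpos : 1 ≤ s.card := Multiset.card_pos_iff_exists_mem.2 ⟨h', hh⟩
  by_cases hlt : k < h'
  · rw [if_pos hlt, Multiset.card_cons, hc, Nat.pred_eq_sub_one]
    omega
  · rw [if_neg hlt, hc, Nat.pred_eq_sub_one]
    omega

lemma steps_card {m : ℕ} {s t : Multiset ℕ} (h : StepsTo HatsMove m s t) :
    t.card ≤ s.card := by
  induction m generalizing s with
  | zero => rw [stepsTo_zero] at h; rw [h]
  | succ n ih => obtain ⟨w, hw, hs⟩ := h; exact le_trans (ih hs) (move_card hw)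

lemma steps_from_zero {m : ℕ} {t : Multiset ℕ} (h : StepsTo HatsMove m 0 t) :
    m = 0 ∧ t = 0 := by
  cases m with
  | zero => exact ⟨rfl, h.symm⟩
  | succ n => obtain ⟨w, hw, -⟩ := h; exact absurd hw move_zero

lemma steps_from_single {m : ℕ} {z : ℕ} {t : Multiset ℕ}
    (h : StepsTo HatsMove m {z} t) : (m = 0 ∧ t = {z}) ∨ (m = 1 ∧ t = 0) := by
  cases m with
  | zero => exact Or.inl ⟨rfl, h.symm⟩
  | succ n =>
    obtain ⟨w, hw, hs⟩ := h
    rw [move_single] at hw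
    subst hw
    obtain ⟨rfl, rfl⟩ := steps_from_zero hs
    exact Or.inr ⟨rfl, rfl⟩

lemma card_pair (x y : ℕ) : ({x, y} : Multiset ℕ).card = 2 := by simp

lemma ddist_single_zero (z : ℕ) : ddist HatsMove {z} (0 : Multiset ℕ) = (1 : ℕ) := by
  refine ddist_eq (m := 1) (stepsTo_succ.2 ⟨0, move_single.2 rfl, stepsTo_zero.2 rfl⟩) ?_
  intro k hk
  rcases steps_from_single hk with ⟨rfl, h⟩ | ⟨rfl, -⟩
  · exact absurd h.symm (by simp [Multiset.singleton_eq_cons_iff])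
  · exact le_refl _

lemma ddist_single_single {z w : ℕ} (h : z ≠ w) :
    ddist HatsMove ({z} : Multiset ℕ) {w} = ⊤ := by
  refine ddist_eq_top fun m hm => ?_
  rcases steps_from_single hm with ⟨-, h2⟩ | ⟨-, h2⟩
  · exact h (by simpa [Multiset.singleton_inj] using h2.symm)
  · simp [Multiset.singleton_eq_cons_iff] at h2

lemma ddist_single_ne {z : ℕ} {t : Multiset ℕ} (h1 : t ≠ {z}) (h2 : t ≠ 0) :
    ddist HatsMove ({z} : Multiset ℕ) t = ⊤ := by
  refine ddist_eq_top fun m hm => ?_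
  rcases steps_from_single hm with ⟨-, h⟩ | ⟨-, h⟩
  · exact h1 h
  · exact h2 h

lemma ddist_zero_ne {t : Multiset ℕ} (h : t ≠ 0) :
    ddist HatsMove (0 : Multiset ℕ) t = ⊤ :=
  ddist_eq_top fun _ hm => h (steps_from_zero hm).2

end Moves

section Chain

/-- one step of the subtractive Euclid chain, kept as a sorted pair -/
def nx (p : ℕ × ℕ) : ℕ × ℕ :=
  if p.1 < p.2 then (min p.1 (p.2 - p.1), max p.1 (p.2 - p.1)) else p

def ch (a b : ℕ) (i : ℕ) : ℕ × ℕ := nx^[i] (a, b)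

def MM (a b i : ℕ) : Multiset ℕ := {(ch a b i).1, (ch a b i).2}

noncomputable def NN (a b : ℕ) : ℕ := sInf {i | (ch a b i).1 = (ch a b i).2}

noncomputable def ss1 (a b : ℕ) : ℕ := sInf {i | (ch a b i).1 = 1}

variable {a b : ℕ} (ha : 2 ≤ a) (hb : a + 2 ≤ b) (hgcd : Nat.gcd a b = 1)

lemma ch_zero : ch a b 0 = (a, b) := rfl

lemma ch_succ (i : ℕ) : ch a b (i + 1) = nx (ch a b i) :=
  Function.iterate_succ_apply' _ _ _

def GoodP (p : ℕ × ℕ) : Prop := 0 < p.1 ∧ p.1 ≤ p.2 ∧ Nat.gcd p.1 p.2 = 1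

lemma nx_good {p : ℕ × ℕ} (h : GoodP p) : GoodP (nx p) := by
  obtain ⟨h1, h2, h3⟩ := h
  unfold nx
  split
  · rename_i hlt
    refine ⟨?_, ?_, ?_⟩
    · simp only [lt_min_iff]
      omega
    · exact min_le_max
    · rcases le_total p.1 (p.2 - p.1) with hle | hle
      · rw [min_eq_left hle, max_eq_right hle, Nat.gcd_sub_self_right h2]
        exact h3
      · rw [min_eq_right hle, max_eq_left hle, Nat.gcd_comm, Nat.gcd_sub_self_right h2]
        exact h3
  · exact ⟨h1, h2, h3⟩

include ha hb hgcd in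
lemma ch_good (i : ℕ) : GoodP (ch a b i) := by
  induction i with
  | zero => rw [ch_zero]; exact ⟨by omega, by omega, hgcd⟩
  | succ n ih => rw [ch_succ]; exact nx_good ih

include ha hb hgcd in
lemma ch_fix_exists : ∃ i, (ch a b i).1 = (ch a b i).2 := by
  have key : ∀ n : ℕ, ∀ i : ℕ, (ch a b i).2 ≤ n → ∃ j, (ch a b j).1 = (ch a b j).2 := by
    intro n
    induction n with
    | zero =>
      intro i hi
      have h := ch_good ha hb hgcd i
      have h1 := h.1
      have h2 := h.2.1
      exact absurd hi (by omega)
    | succ n ih =>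
      intro i hi
      rcases eq_or_lt_of_le (ch_good ha hb hgcd i).2.1 with heq | hlt
      · exact ⟨i, heq⟩
      · refine ih (i + 1) ?_
        rw [ch_succ]
        unfold nx
        rw [if_pos hlt]
        simp only [max_le_iff]
        have := (ch_good ha hb hgcd i).1
        omega
  exact key (ch a b 0).2 0 le_rfl

include ha hb hgcd in
lemma NN_spec : (ch a b (NN a b)).1 = (ch a b (NN a b)).2 :=
  Nat.sInf_mem (ch_fix_exists ha hb hgcd)

include ha hb hgcd in
lemma ch_NN : ch a b (NN a b) = (1, 1) := by
  have h := NN_spec ha hb hgcd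
  have hg := ch_good ha hb hgcd (NN a b)
  have : (ch a b (NN a b)).1 = 1 := by
    have := hg.2.2
    rw [← h, Nat.gcd_self] at this
    exact this
  have h2 : (ch a b (NN a b)).2 = 1 := by omega
  exact Prod.ext this h2

lemma ch_lt_NN {i : ℕ} (hi : i < NN a b) : (ch a b i).1 ≠ (ch a b i).2 := by
  unfold NN at hi
  have h : i ∉ {j | (ch a b j).1 = (ch a b j).2} := Nat.notMem_of_lt_sInf hi
  exact h

include ha hb hgcd in
lemma ch_strict {i : ℕ} (hi : i < NN a b) : (ch a b i).1 < (ch a b i).2 :=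
  lt_of_le_of_ne (ch_good ha hb hgcd i).2.1 (ch_lt_NN hi)

lemma pair_min_max (u v : ℕ) : ({min u v, max u v} : Multiset ℕ) = {u, v} := by
  rcases le_total u v with h | h
  · rw [min_eq_left h, max_eq_right h]
  · rw [min_eq_right h, max_eq_left h, pair_comm]

include ha hb hgcd in
lemma MM_succ {i : ℕ} (hi : i < NN a b) :
    MM a b (i + 1) = {(ch a b i).1, (ch a b i).2 - (ch a b i).1} := by
  have hlt := ch_strict ha hb hgcd hi
  unfold MM
  rw [ch_succ]
  unfold nx
  rw [if_pos hlt]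
  exact pair_min_max _ _

include ha hb hgcd in
lemma NN_pos : 0 < NN a b := by
  rcases Nat.eq_zero_or_pos (NN a b) with h | h
  · have := ch_NN ha hb hgcd
    rw [h, ch_zero] at this
    have : a = 1 := congrArg Prod.fst this
    omega
  · exact h

include ha hb hgcd in
lemma ch_prev : ch a b (NN a b - 1) = (1, 2) := by
  have hN := NN_pos ha hb hgcd
  have hs : NN a b - 1 + 1 = NN a b := by omega
  have hlt : NN a b - 1 < NN a b := by omega
  have hstep : nx (ch a b (NN a b - 1)) = (1, 1) := by
    rw [← ch_succ, hs]; exact ch_NN ha hb hgcd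
  have hlt2 := ch_strict ha hb hgcd hlt
  set p := ch a b (NN a b - 1) with hp
  unfold nx at hstep
  rw [if_pos hlt2] at hstep
  have h1 : min p.1 (p.2 - p.1) = 1 := congrArg Prod.fst hstep
  have h2 : max p.1 (p.2 - p.1) = 1 := congrArg Prod.snd hstep
  have hx : p.1 = 1 := by
    rcases le_total p.1 (p.2 - p.1) with h | h
    · rw [min_eq_left h] at h1; exact h1
    · rw [max_eq_left h] at h2; exact h2
  have hy : p.2 = 2 := by
    rcases le_total p.1 (p.2 - p.1) with h | h
    · rw [max_eq_right h] at h2; omega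
    · rw [min_eq_right h] at h1; omega
  exact Prod.ext hx hy

include ha hb hgcd in
lemma NN_ge2 : 2 ≤ NN a b := by
  have h1 := NN_pos ha hb hgcd
  by_contra h
  have : NN a b = 1 := by omega
  have h2 := ch_prev ha hb hgcd
  rw [this] at h2
  rw [show (1:ℕ) - 1 = 0 from rfl, ch_zero] at h2
  have : a = 1 := congrArg Prod.fst h2
  omega

lemma y_mono (i : ℕ) : (ch a b (i+1)).2 ≤ (ch a b i).2 := by
  rw [ch_succ]
  unfold nx
  split
  · rename_i h
    simp only [max_le_iff]
    omega
  · exact le_rfl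

include ha hb hgcd in
lemma y_strict {i : ℕ} (hi : i < NN a b) : (ch a b (i+1)).2 < (ch a b i).2 := by
  have hlt := ch_strict ha hb hgcd hi
  have hx := (ch_good ha hb hgcd i).1
  rw [ch_succ]
  unfold nx
  rw [if_pos hlt]
  simp only [max_lt_iff]
  omega

lemma y_le {i j : ℕ} (hij : i ≤ j) : (ch a b j).2 ≤ (ch a b i).2 := by
  induction j with
  | zero => simp_all
  | succ n ih =>
    rcases Nat.lt_or_ge i (n+1) with h | h
    · exact le_trans (y_mono n) (ih (by omega))
    · have : i = n + 1 := by omega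
      rw [this]

lemma mem_MM {z i : ℕ} : z ∈ MM a b i ↔ z = (ch a b i).1 ∨ z = (ch a b i).2 := by
  unfold MM; simp

lemma mem_le_y {z i : ℕ} (ha' : 2 ≤ a) (hb' : a + 2 ≤ b) (hg' : Nat.gcd a b = 1)
    (h : z ∈ MM a b i) : z ≤ (ch a b i).2 := by
  rcases mem_MM.1 h with rfl | rfl
  · exact (ch_good ha' hb' hg' i).2.1
  · exact le_rfl

include ha hb hgcd in
lemma sum_strict {i : ℕ} (hi : i < NN a b) :
    (ch a b (i+1)).1 + (ch a b (i+1)).2 < (ch a b i).1 + (ch a b i).2 := by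
  have hlt := ch_strict ha hb hgcd hi
  have hx := (ch_good ha hb hgcd i).1
  rw [ch_succ]
  unfold nx
  rw [if_pos hlt]
  rcases le_total (ch a b i).1 ((ch a b i).2 - (ch a b i).1) with h | h
  · rw [min_eq_left h, max_eq_right h]; omega
  · rw [min_eq_right h, max_eq_left h]; omega

include ha hb hgcd in
lemma sum_lt {i j : ℕ} (hij : i < j) (hj : j ≤ NN a b) :
    (ch a b j).1 + (ch a b j).2 < (ch a b i).1 + (ch a b i).2 := by
  induction j with
  | zero => omega
  | succ n ih =>
    rcases Nat.lt_or_ge i n with h | h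
    · exact lt_trans (sum_strict ha hb hgcd (by omega)) (ih h (by omega))
    · have : i = n := by omega
      subst this
      exact sum_strict ha hb hgcd (by omega)

include ha hb hgcd in
lemma MM_inj {i j : ℕ} (hi : i ≤ NN a b) (hj : j ≤ NN a b) (h : MM a b i = MM a b j) :
    i = j := by
  have hsum : (ch a b i).1 + (ch a b i).2 = (ch a b j).1 + (ch a b j).2 := by
    have := congrArg Multiset.sum h
    unfold MM at this
    simpa using this
  by_contra hne
  rcases Nat.lt_or_ge i j with hlt | hge
  · exact absurd hsum (by have := sum_lt ha hb hgcd hlt hj; omega)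
  · have hlt : j < i := by omega
    exact absurd hsum (by have := sum_lt ha hb hgcd hlt hi; omega)

end Chain

section Chain2

variable {a b : ℕ} (ha : 2 ≤ a) (hb : a + 2 ≤ b) (hgcd : Nat.gcd a b = 1)

lemma ch_stab {i : ℕ} (ha' : 2 ≤ a) (hb' : a + 2 ≤ b) (hg' : Nat.gcd a b = 1)
    (hi : NN a b ≤ i) : ch a b i = (1, 1) := by
  induction i with
  | zero => exact absurd hi (by have := NN_pos ha' hb' hg'; omega)
  | succ n ih =>
    rcases Nat.lt_or_ge n (NN a b) with h | h
    · have : NN a b = n + 1 := by omega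
      rw [← this]; exact ch_NN ha' hb' hg'
    · rw [ch_succ, ih h]
      unfold nx
      rw [if_neg (by norm_num)]

include ha hb hgcd in
lemma x_one_succ {i : ℕ} (h : (ch a b i).1 = 1) : (ch a b (i+1)).1 = 1 := by
  rw [ch_succ]
  unfold nx
  split
  · rename_i hlt
    rw [h] at hlt ⊢
    have : min 1 ((ch a b i).2 - 1) = 1 := by omega
    exact this
  · exact h

include ha hb hgcd in
lemma x_one_mono {i j : ℕ} (h : (ch a b i).1 = 1) (hij : i ≤ j) : (ch a b j).1 = 1 := by
  induction j with
  | zero =>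
    have hi0 : i = 0 := by omega
    subst hi0; exact h
  | succ n ih =>
    rcases Nat.lt_or_ge i (n+1) with h' | h'
    · exact x_one_succ ha hb hgcd (ih (by omega))
    · have hi0 : i = n + 1 := by omega
      subst hi0; exact h

include ha hb hgcd in
lemma one_mem_iff_x {i : ℕ} : 1 ∈ MM a b i ↔ (ch a b i).1 = 1 := by
  rw [mem_MM]
  constructor
  · rintro (h | h)
    · exact h.symm
    · obtain ⟨hg1, hg2, hg3⟩ := ch_good ha hb hgcd i
      omega
  · intro h; exact Or.inl h.symm

include ha hb hgcd in
lemma ss1_spec : (ch a b (ss1 a b)).1 = 1 := by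
  have hex : ∃ i, (ch a b i).1 = 1 := ⟨NN a b, by rw [ch_NN ha hb hgcd]⟩
  exact Nat.sInf_mem hex

include ha hb hgcd in
lemma one_mem_iff {i : ℕ} : 1 ∈ MM a b i ↔ ss1 a b ≤ i := by
  rw [one_mem_iff_x ha hb hgcd]
  constructor
  · intro h
    exact Nat.sInf_le h
  · intro h
    exact x_one_mono ha hb hgcd (ss1_spec ha hb hgcd) h

include ha hb hgcd in
lemma ss1_le : ss1 a b ≤ NN a b - 1 := by
  have : (ch a b (NN a b - 1)).1 = 1 := by rw [ch_prev ha hb hgcd]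
  exact Nat.sInf_le this

include ha hb hgcd in
lemma ss1_pos : 1 ≤ ss1 a b := by
  by_contra h
  have h0 : ss1 a b = 0 := by omega
  have h1 := ss1_spec ha hb hgcd
  rw [h0] at h1
  have h2 : a = 1 := h1
  omega

include ha hb hgcd in
lemma MM_one : MM a b 1 = {a, b - a} := by
  have h0 : (0 : ℕ) < NN a b := NN_pos ha hb hgcd
  have := MM_succ ha hb hgcd h0
  rw [ch_zero] at this
  exact this

include ha hb hgcd in
lemma y1_eq : (ch a b 1).2 = max a (b - a) := by
  have h : ch a b 1 = nx (a, b) := ch_succ 0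
  unfold nx at h
  rw [if_pos (by omega : (a, b).1 < (a, b).2)] at h
  rw [h]

include ha hb hgcd in
lemma two_x {j : ℕ} (h : (ch a b j).1 = 2) : ss1 a b = NN a b - 1 := by
  have main : ∀ d j, NN a b - j = d → (ch a b j).1 = 2 → ss1 a b = NN a b - 1 := by
    intro d
    induction d with
    | zero =>
      intro j hd h2
      have hj : NN a b ≤ j := by omega
      rw [ch_stab ha hb hgcd hj] at h2
      norm_num at h2
    | succ n ih =>
      intro j hd h2
      have hjN : j < NN a b := by
        by_contra hc
        rw [ch_stab ha hb hgcd (by omega)] at h2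
        norm_num at h2
      have hlt := ch_strict ha hb hgcd hjN
      have hg := ch_good ha hb hgcd j
      have hy : Nat.gcd 2 (ch a b j).2 = 1 := by rw [← h2]; exact hg.2.2
      have hyodd : (ch a b j).2 % 2 = 1 := by
        rcases Nat.even_or_odd (ch a b j).2 with he | ho
        · exfalso
          obtain ⟨k, hk⟩ := he
          have hdvd : 2 ∣ Nat.gcd 2 (ch a b j).2 := Nat.dvd_gcd dvd_rfl ⟨k, by omega⟩
          rw [hy] at hdvd
          norm_num at hdvd
        · exact Nat.odd_iff.mp ho
      have hstep : ch a b (j+1) = nx (ch a b j) := ch_succ j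
      unfold nx at hstep
      rw [if_pos hlt, h2] at hstep
      rcases Nat.lt_or_ge ((ch a b j).2 - 2) 2 with hsmall | hbig
      · -- y = 3, next pair is (1,2)
        have hy3 : (ch a b j).2 = 3 := by omega
        rw [hy3] at hstep
        norm_num at hstep
        have h12 : ch a b (j+1) = (1, 2) := hstep
        have hN2 : ch a b (j+2) = (1, 1) := by
          rw [ch_succ, h12]
          unfold nx
          norm_num
        have hNle : NN a b ≤ j + 2 := Nat.sInf_le (show (ch a b _).1 = (ch a b _).2 by rw [hN2])
        have hNgt : j + 1 < NN a b := by
          by_contra hc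
          have := ch_stab ha hb hgcd (show NN a b ≤ j+1 by omega)
          rw [this] at h12
          exact absurd (congrArg Prod.snd h12) (by norm_num)
        have hNn : NN a b = j + 2 := by omega
        have hle : ss1 a b ≤ j + 1 := Nat.sInf_le (show (ch a b _).1 = 1 by rw [h12])
        have hge : ¬ (ss1 a b ≤ j) := by
          intro hc
          have := x_one_mono ha hb hgcd (ss1_spec ha hb hgcd) hc
          omega
        omega
      · -- next x is still 2
        have hne : (ch a b j).2 - 2 ≠ 2 := by omega
        have hx2 : (ch a b (j+1)).1 = 2 := by
          rw [hstep]
          have : min 2 ((ch a b j).2 - 2) = 2 := by omega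
          exact this
        exact ih (j+1) (by omega) hx2
  exact main (NN a b - j) j rfl h

include ha hb hgcd in
lemma two_mem_iff (hcase : ss1 a b < NN a b - 1) {j : ℕ} :
    2 ∈ MM a b j ↔ j = NN a b - 1 := by
  constructor
  · intro h
    have hN2' : 2 ≤ NN a b := NN_ge2 ha hb hgcd
    rcases mem_MM.1 h with h2 | h2
    · exact absurd (two_x ha hb hgcd h2.symm) (by omega)
    · -- y_j = 2, so x_j = 1 and ch j = (1,2)
      obtain ⟨hg1, hg2, hg3⟩ := ch_good ha hb hgcd j
      have hx : (ch a b j).1 = 1 := by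
        rcases Nat.lt_or_ge (ch a b j).1 2 with h' | h'
        · omega
        · exfalso
          have hxx : (ch a b j).1 = 2 := by omega
          exact absurd (two_x ha hb hgcd hxx) (by omega)
      have h12 : ch a b j = (1, 2) := Prod.ext hx h2.symm
      have hN2 : ch a b (j+1) = (1, 1) := by
        rw [ch_succ, h12]; unfold nx; norm_num
      have hNle : NN a b ≤ j + 1 := Nat.sInf_le (show (ch a b _).1 = (ch a b _).2 by rw [hN2])
      have hNgt : j < NN a b := by
        by_contra hc
        have := ch_stab ha hb hgcd (show NN a b ≤ j by omega)
        rw [this] at h12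
        exact absurd (congrArg Prod.snd h12) (by norm_num)
      omega
  · rintro rfl
    rw [mem_MM, ch_prev ha hb hgcd]
    norm_num

include ha hb hgcd in
lemma bound_b {j z : ℕ} (hj : 1 ≤ j) (h : z ∈ MM a b j) : z < b := by
  have h1 : z ≤ (ch a b j).2 := mem_le_y ha hb hgcd h
  have h2 : (ch a b j).2 ≤ (ch a b 1).2 := y_le hj
  have h3 : (ch a b 1).2 < (ch a b 0).2 := y_strict ha hb hgcd (NN_pos ha hb hgcd)
  rw [ch_zero] at h3
  omega

include ha hb hgcd in
lemma bound_c {j z : ℕ} (hj : 2 ≤ j) (h : z ∈ MM a b j) : z < max a (b - a) := by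
  have h1 : z ≤ (ch a b j).2 := mem_le_y ha hb hgcd h
  have h2 : (ch a b j).2 ≤ (ch a b 2).2 := y_le hj
  have h3 : (ch a b 2).2 < (ch a b 1).2 := by
    have := y_strict ha hb hgcd (show 1 < NN a b by have := NN_ge2 ha hb hgcd; omega)
    exact this
  have h4 := y1_eq ha hb hgcd
  omega

include ha hb hgcd in
lemma a_ne_b' : a ≠ b - a := by
  intro h
  have hb2 : b = 2 * a := by omega
  rw [hb2] at hgcd
  have h2 : Nat.gcd a (2 * a) = a := Nat.gcd_eq_left ⟨2, by ring⟩
  omega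

end Chain2

section Walks
set_option linter.unusedSectionVars false

lemma card_MM {a b i : ℕ} : (MM a b i).card = 2 := card_pair _ _

variable {a b : ℕ} (ha : 2 ≤ a) (hb : a + 2 ≤ b) (hgcd : Nat.gcd a b = 1)

include ha hb hgcd in
lemma move_from_M {i : ℕ} (hi : i ≤ NN a b) {t : Multiset ℕ} :
    HatsMove (MM a b i) t ↔ ((∃ z ∈ MM a b i, t = {z}) ∨ (i < NN a b ∧ t = MM a b (i+1))) := by
  have hg := ch_good ha hb hgcd i
  rw [show MM a b i = {(ch a b i).1, (ch a b i).2} from rfl, move_pair hg.2.1]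
  constructor
  · rintro (rfl | rfl | ⟨hlt, rfl⟩)
    · exact Or.inl ⟨(ch a b i).2, by simp, rfl⟩
    · exact Or.inl ⟨(ch a b i).1, by simp, rfl⟩
    · have hiN : i < NN a b := by
        rcases Nat.lt_or_ge i (NN a b) with h | h
        · exact h
        · rw [ch_stab ha hb hgcd h] at hlt; norm_num at hlt
      exact Or.inr ⟨hiN, (MM_succ ha hb hgcd hiN).symm⟩
  · rintro (⟨z, hz, rfl⟩ | ⟨hiN, rfl⟩)
    · rcases mem_MM.1 hz with rfl | rfl
      · right; left; rfl
      · left; rfl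
    · right; right
      exact ⟨ch_strict ha hb hgcd hiN, MM_succ ha hb hgcd hiN⟩

include ha hb hgcd in
lemma steps_pair {m i : ℕ} {t : Multiset ℕ} (hi : i ≤ NN a b)
    (h : StepsTo HatsMove m (MM a b i) t) (hc : 2 ≤ t.card) :
    t = MM a b (i + m) ∧ i + m ≤ NN a b := by
  induction m generalizing i with
  | zero => exact ⟨h.symm, by omega⟩
  | succ n ih =>
    obtain ⟨w, hw, hs⟩ := h
    have hcw : 2 ≤ w.card := le_trans hc (steps_card hs)
    rcases (move_from_M ha hb hgcd hi).1 hw with ⟨z, -, rfl⟩ | ⟨hiN, rfl⟩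
    · simp at hcw
    · have := ih (by omega) hs
      exact ⟨by rw [this.1]; ring_nf, by omega⟩

include ha hb hgcd in
lemma steps_pair_exists {i j : ℕ} (hij : i ≤ j) (hj : j ≤ NN a b) :
    StepsTo HatsMove (j - i) (MM a b i) (MM a b j) := by
  have main : ∀ d i, i + d = j → StepsTo HatsMove d (MM a b i) (MM a b j) := by
    intro d
    induction d with
    | zero =>
      intro i hi
      rw [stepsTo_zero]
      have hij' : i = j := by omega
      rw [hij']
    | succ n ih =>
      intro i hi
      refine stepsTo_succ.2 ⟨MM a b (i+1), ?_, ih (i+1) (by omega)⟩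
      exact (move_from_M ha hb hgcd (by omega)).2 (Or.inr ⟨by omega, rfl⟩)
  have := main (j - i) i (by omega)
  exact this

include ha hb hgcd in
lemma steps_to_single {m i z : ℕ} (hi : i ≤ NN a b)
    (h : StepsTo HatsMove m (MM a b i) {z}) :
    ∃ j, i ≤ j ∧ j ≤ NN a b ∧ z ∈ MM a b j ∧ m = j - i + 1 := by
  induction m generalizing i with
  | zero =>
    exfalso
    rw [stepsTo_zero] at h
    have := congrArg Multiset.card h
    rw [card_MM] at this
    simp at this
  | succ n ih =>
    obtain ⟨w, hw, hs⟩ := h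
    rcases (move_from_M ha hb hgcd hi).1 hw with ⟨z', hz', rfl⟩ | ⟨hiN, rfl⟩
    · rcases steps_from_single hs with ⟨rfl, h2⟩ | ⟨-, h2⟩
      · have : z = z' := by simpa [Multiset.singleton_inj] using h2
        subst this
        exact ⟨i, le_rfl, hi, hz', by omega⟩
      · exfalso
        exact absurd (congrArg Multiset.card h2) (by simp)
    · obtain ⟨j, hj1, hj2, hj3, hj4⟩ := ih (by omega) hs
      exact ⟨j, by omega, hj2, hj3, by omega⟩

include ha hb hgcd in
lemma steps_to_single_exists {i j z : ℕ} (hij : i ≤ j) (hj : j ≤ NN a b)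
    (hz : z ∈ MM a b j) : StepsTo HatsMove (j - i + 1) (MM a b i) {z} := by
  refine (steps_pair_exists ha hb hgcd hij hj).snoc ?_
  exact (move_from_M ha hb hgcd hj).2 (Or.inl ⟨z, hz, rfl⟩)

-- ddist evaluations

include ha hb hgcd in
lemma ddist_MM_MM {i j : ℕ} (hij : i ≤ j) (hj : j ≤ NN a b) :
    ddist HatsMove (MM a b i) (MM a b j) = ((j - i : ℕ) : ℕ∞) := by
  refine ddist_eq (steps_pair_exists ha hb hgcd hij hj) ?_
  intro k hk
  obtain ⟨h1, h2⟩ := steps_pair ha hb hgcd (le_trans hij hj) hk (by rw [card_MM])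
  have := MM_inj ha hb hgcd h2 hj h1.symm
  omega

include ha hb hgcd in
lemma ddist_MM_MM_top {i j : ℕ} (hij : j < i) (hi : i ≤ NN a b) (hj : j ≤ NN a b) :
    ddist HatsMove (MM a b i) (MM a b j) = ⊤ := by
  refine ddist_eq_top fun m hm => ?_
  obtain ⟨h1, h2⟩ := steps_pair ha hb hgcd hi hm (by rw [card_MM])
  have := MM_inj ha hb hgcd h2 hj h1.symm
  omega

include ha hb hgcd in
lemma ddist_MM_single {i j₀ z : ℕ} (hij : i ≤ j₀) (hj : j₀ ≤ NN a b) (hz : z ∈ MM a b j₀)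
    (hmin : ∀ j, i ≤ j → j ≤ NN a b → z ∈ MM a b j → j₀ ≤ j) :
    ddist HatsMove (MM a b i) {z} = ((j₀ - i + 1 : ℕ) : ℕ∞) := by
  refine ddist_eq (steps_to_single_exists ha hb hgcd hij hj hz) ?_
  intro k hk
  obtain ⟨j, h1, h2, h3, h4⟩ := steps_to_single ha hb hgcd (le_trans hij hj) hk
  have := hmin j h1 h2 h3
  omega

include ha hb hgcd in
lemma ddist_MM_single_top {i z : ℕ} (hi : i ≤ NN a b)
    (h : ∀ j, i ≤ j → j ≤ NN a b → z ∉ MM a b j) :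
    ddist HatsMove (MM a b i) {z} = ⊤ := by
  refine ddist_eq_top fun m hm => ?_
  obtain ⟨j, h1, h2, h3, -⟩ := steps_to_single ha hb hgcd hi hm
  exact h j h1 h2 h3

include ha hb hgcd in
lemma ddist_single_MM {z i : ℕ} : ddist HatsMove ({z} : Multiset ℕ) (MM a b i) = ⊤ := by
  refine ddist_single_ne ?_ ?_
  · intro h
    have := congrArg Multiset.card h
    rw [card_MM] at this
    simp at this
  · intro h
    have := congrArg Multiset.card h
    rw [card_MM] at this
    simp at this

include ha hb hgcd in
lemma ddist_zero_MM {i : ℕ} : ddist HatsMove (0 : Multiset ℕ) (MM a b i) = ⊤ := by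
  refine ddist_zero_ne ?_
  intro h
  have := congrArg Multiset.card h
  rw [card_MM] at this
  simp at this

lemma ddist_zero_single {z : ℕ} : ddist HatsMove (0 : Multiset ℕ) {z} = ⊤ := by
  refine ddist_zero_ne ?_
  intro h
  have := congrArg Multiset.card h
  simp at this

-- reachability

include ha hb hgcd in
lemma reach_MM {i : ℕ} (hi : i ≤ NN a b) :
    Relation.ReflTransGen HatsMove {a, b} (MM a b i) := by
  induction i with
  | zero => exact Relation.ReflTransGen.refl
  | succ n ih =>
    refine (ih (by omega)).tail ?_
    exact (move_from_M ha hb hgcd (by omega)).2 (Or.inr ⟨by omega, rfl⟩)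

include ha hb hgcd in
lemma reach_single {z j : ℕ} (hj : j ≤ NN a b) (hz : z ∈ MM a b j) :
    Relation.ReflTransGen HatsMove {a, b} ({z} : Multiset ℕ) := by
  refine (reach_MM ha hb hgcd hj).tail ?_
  exact (move_from_M ha hb hgcd hj).2 (Or.inl ⟨z, hz, rfl⟩)

include ha hb hgcd in
lemma vertex_class {t : Multiset ℕ} (h : Relation.ReflTransGen HatsMove {a, b} t) :
    (∃ i, i ≤ NN a b ∧ t = MM a b i) ∨
    (∃ z j, j ≤ NN a b ∧ z ∈ MM a b j ∧ t = {z}) ∨ t = 0 := by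
  induction h with
  | refl => exact Or.inl ⟨0, by omega, rfl⟩
  | tail h1 h2 ih =>
    rename_i s t'
    rcases ih with ⟨i, hi, rfl⟩ | ⟨z, j, hj, hz, rfl⟩ | rfl
    · rcases (move_from_M ha hb hgcd hi).1 h2 with ⟨z, hz, rfl⟩ | ⟨hiN, rfl⟩
      · exact Or.inr (Or.inl ⟨z, i, hi, hz, rfl⟩)
      · exact Or.inl ⟨i + 1, by omega, rfl⟩
    · rw [move_single] at h2
      exact Or.inr (Or.inr h2)
    · exact absurd h2 move_zero

end Walks

section Table
set_option linter.unusedSectionVars false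

noncomputable def occ (a b z : ℕ) : ℕ := sInf {j | z ∈ MM a b j}

variable {a b : ℕ} (ha : 2 ≤ a) (hb : a + 2 ≤ b) (hgcd : Nat.gcd a b = 1)
include ha hb hgcd

omit ha hb hgcd in
lemma MM_zero : MM a b 0 = {a, b} := rfl

lemma MM_stab {j : ℕ} (hj : NN a b ≤ j) : MM a b j = {1, 1} := by
  unfold MM
  rw [ch_stab ha hb hgcd hj]

omit ha hb hgcd in
lemma occ_mem {z : ℕ} (h : ∃ j, z ∈ MM a b j) : z ∈ MM a b (occ a b z) :=
  Nat.sInf_mem h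

omit ha hb hgcd in
lemma occ_le {z j : ℕ} (h : z ∈ MM a b j) : occ a b z ≤ j := Nat.sInf_le h

-- sdist table
lemma sdist_P_P {i j : ℕ} (hij : i ≤ j) (hj : j ≤ NN a b) :
    sdist HatsMove (MM a b i) (MM a b j) = ((j - i : ℕ) : ℤ) := by
  rcases eq_or_lt_of_le hij with rfl | hlt
  · rw [show ((i - i : ℕ) : ℤ) = ((0 : ℕ) : ℤ) by norm_num]
    exact sdist_self
  · refine sdist_of_le (ddist_MM_MM ha hb hgcd hij hj) ?_
    rw [ddist_MM_MM_top ha hb hgcd hlt hj (by omega)]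
    exact le_top

lemma sdist_P_single_1 {i : ℕ} (hi : i ≤ NN a b) :
    sdist HatsMove (MM a b i) {1} = ((max i (ss1 a b) - i + 1 : ℕ) : ℤ) := by
  refine sdist_of_le ?_ ?_
  · refine ddist_MM_single ha hb hgcd (le_max_left _ _) ?_ ?_ ?_
    · have := ss1_le ha hb hgcd
      omega
    · rw [one_mem_iff ha hb hgcd]
      exact le_max_right _ _
    · intro j h1 h2 h3
      rw [one_mem_iff ha hb hgcd] at h3
      omega
  · rw [ddist_single_MM ha hb hgcd]
    exact le_top

lemma sdist_P_single_mem {i z : ℕ} (hi : i ≤ NN a b) (hz : z ∈ MM a b i) :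
    sdist HatsMove (MM a b i) {z} = ((1 : ℕ) : ℤ) := by
  refine sdist_of_le ?_ ?_
  · have := ddist_MM_single ha hb hgcd (le_refl i) hi hz (fun j h1 _ _ => h1)
    rw [show i - i + 1 = 1 by omega] at this
    exact this
  · rw [ddist_single_MM ha hb hgcd]
    exact le_top

lemma sdist_P_single_top {i z : ℕ} (hi : i ≤ NN a b)
    (h : ∀ j, i ≤ j → j ≤ NN a b → z ∉ MM a b j) :
    sdist HatsMove (MM a b i) {z} = ⊤ :=
  sdist_top (ddist_MM_single_top ha hb hgcd hi h) (ddist_single_MM ha hb hgcd)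

lemma sdist_PN_single {z : ℕ} (hz : z ≠ 1) :
    sdist HatsMove (MM a b (NN a b)) {z} = ⊤ := by
  refine sdist_P_single_top ha hb hgcd le_rfl ?_
  intro j h1 h2 hmem
  rw [MM_stab ha hb hgcd h1] at hmem
  simp only [Multiset.insert_eq_cons, Multiset.mem_cons, Multiset.mem_singleton, or_self] at hmem
  exact hz hmem

lemma sdist_P0_single {z j : ℕ} (hj : j ≤ NN a b) (hz : z ∈ MM a b j) :
    sdist HatsMove (MM a b 0) {z} = ((occ a b z + 1 : ℕ) : ℤ) := by
  refine sdist_of_le ?_ ?_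
  · have := ddist_MM_single ha hb hgcd (Nat.zero_le _) (le_trans (occ_le hz) hj)
      (occ_mem ⟨j, hz⟩) (fun j' _ _ h3 => occ_le h3)
    rw [show occ a b z - 0 + 1 = occ a b z + 1 by omega] at this
    exact this
  · rw [ddist_single_MM ha hb hgcd]
    exact le_top

lemma sdist_S1_P {i : ℕ} (hi : i ≤ NN a b) :
    sdist HatsMove ({1} : Multiset ℕ) (MM a b i) =
      ((-((max i (ss1 a b) - i + 1 : ℕ) : ℤ)) : ℤ) := by
  refine sdist_of_rev (ddist_single_MM ha hb hgcd) ?_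
  refine ddist_MM_single ha hb hgcd (le_max_left _ _) ?_ ?_ ?_
  · have := ss1_le ha hb hgcd
    omega
  · rw [one_mem_iff ha hb hgcd]
    exact le_max_right _ _
  · intro j h1 h2 h3
    rw [one_mem_iff ha hb hgcd] at h3
    omega

omit ha hb hgcd in
lemma sdist_single_single' {z w : ℕ} (h : z ≠ w) :
    sdist HatsMove ({z} : Multiset ℕ) ({w} : Multiset ℕ) = ⊤ :=
  sdist_top (ddist_single_single h) (ddist_single_single (Ne.symm h))

omit ha hb hgcd in
lemma sdist_single_zero' (z : ℕ) :
    sdist HatsMove ({z} : Multiset ℕ) (0 : Multiset ℕ) = ((1 : ℕ) : ℤ) :=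
  sdist_of_le (ddist_single_zero z) (by rw [ddist_zero_single]; exact le_top)

omit ha hb hgcd in
lemma sdist_zero_single' (z : ℕ) :
    sdist HatsMove (0 : Multiset ℕ) ({z} : Multiset ℕ) = ((-((1 : ℕ) : ℤ)) : ℤ) :=
  sdist_of_rev ddist_zero_single (ddist_single_zero z)

lemma sdist_single_P {z i : ℕ} (hi : i ≤ NN a b)
    (h : ∀ j, i ≤ j → j ≤ NN a b → z ∉ MM a b j) :
    sdist HatsMove ({z} : Multiset ℕ) (MM a b i) = ⊤ :=
  sdist_top (ddist_single_MM ha hb hgcd) (ddist_MM_single_top ha hb hgcd hi h)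

lemma sdist_single_PN {z : ℕ} (hz : z ≠ 1) :
    sdist HatsMove ({z} : Multiset ℕ) (MM a b (NN a b)) = ⊤ := by
  refine sdist_single_P ha hb hgcd le_rfl ?_
  intro j h1 h2 hmem
  rw [MM_stab ha hb hgcd h1] at hmem
  simp at hmem
  exact hz hmem

lemma sdist_zero_P {i : ℕ} (hi : i ≤ NN a b) {m : ℕ}
    (h : ddist HatsMove (MM a b i) 0 = (m : ℕ∞)) :
    sdist HatsMove (0 : Multiset ℕ) (MM a b i) = ((-(m : ℤ)) : ℤ) :=
  sdist_of_rev (ddist_zero_MM ha hb hgcd) h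

lemma sdist_P_single_2 (hcase : ss1 a b < NN a b - 1) {i : ℕ} (hi : i ≤ NN a b - 1) :
    sdist HatsMove (MM a b i) {2} = ((NN a b - i : ℕ) : ℤ) := by
  have hN := NN_ge2 ha hb hgcd
  refine sdist_of_le ?_ ?_
  · have := ddist_MM_single ha hb hgcd (i := i) (j₀ := NN a b - 1) (by omega) (by omega)
      ((two_mem_iff ha hb hgcd hcase).2 rfl)
      (fun j _ _ h3 => by rw [two_mem_iff ha hb hgcd hcase] at h3; omega)
    rw [show NN a b - 1 - i + 1 = NN a b - i by omega] at this
    exact this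
  · rw [ddist_single_MM ha hb hgcd]
    exact le_top

lemma occ_eq_cases {z w j j' : ℕ} (hz : z ∈ MM a b j) (hj : j ≤ NN a b)
    (hw : w ∈ MM a b j') (hj' : j' ≤ NN a b) (h : occ a b z = occ a b w) :
    z = w ∨ (z ∈ ({a, b} : Multiset ℕ) ∧ w ∈ ({a, b} : Multiset ℕ)) := by
  have hzt : z ∈ MM a b (occ a b z) := occ_mem ⟨j, hz⟩
  have hwt : w ∈ MM a b (occ a b z) := by rw [h]; exact occ_mem ⟨j', hw⟩
  set t := occ a b z with ht
  rcases Nat.eq_zero_or_pos t with h0 | hpos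
  · right
    rw [h0] at hzt hwt
    rw [MM_zero] at hzt hwt
    exact ⟨hzt, hwt⟩
  · left
    have htN : t ≤ NN a b := le_trans (occ_le hz) hj
    have hlt : t - 1 < NN a b := by omega
    have hsucc : t - 1 + 1 = t := by omega
    have hM := MM_succ ha hb hgcd hlt
    rw [hsucc] at hM
    have hznot : z ∉ MM a b (t - 1) := fun hmem => by
      have := occ_le hmem; omega
    have hwnot : w ∉ MM a b (t - 1) := fun hmem => by
      have := occ_le hmem; rw [← h] at this; omega
    have hx1 : (ch a b (t-1)).1 ∈ MM a b (t - 1) := mem_MM.2 (Or.inl rfl)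
    have hz' : z = (ch a b (t-1)).2 - (ch a b (t-1)).1 := by
      rw [hM] at hzt
      simp only [Multiset.insert_eq_cons, Multiset.mem_cons, Multiset.mem_singleton] at hzt
      rcases hzt with h' | h'
      · exact absurd (h' ▸ hx1) hznot
      · exact h'
    have hw' : w = (ch a b (t-1)).2 - (ch a b (t-1)).1 := by
      rw [hM] at hwt
      simp only [Multiset.insert_eq_cons, Multiset.mem_cons, Multiset.mem_singleton] at hwt
      rcases hwt with h' | h'
      · exact absurd (h' ▸ hx1) hwnot
      · exact h'
    rw [hz', hw']

end Table

section Upper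
set_option linter.unusedSectionVars false

variable {a b : ℕ} (ha : 2 ≤ a) (hb : a + 2 ≤ b) (hgcd : Nat.gcd a b = 1)
include ha hb hgcd

omit ha hb hgcd in
lemma coe_int_inj {x y : ℤ} (h : ((x : WithTop ℤ)) = (y : WithTop ℤ)) : x = y := by
  exact_mod_cast h

lemma upper_resolves {v0 vb1 v11 : HatsV a b}
    (h0 : v0.1 = MM a b 0) (hb1 : vb1.1 = ({b} : Multiset ℕ)) (h11 : v11.1 = ({1} : Multiset ℕ)) :
    Resolves (hatsR a b) {v0, vb1, v11} := by
  intro u v hsv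
  have hA := hsv v0 (by simp)
  have hB := hsv vb1 (by simp)
  have hC := hsv v11 (by simp)
  rw [sdist_hatsR, sdist_hatsR, h0] at hA
  rw [sdist_hatsR, sdist_hatsR, hb1] at hB
  rw [sdist_hatsR, sdist_hatsR, h11] at hC
  apply Subtype.ext
  rcases vertex_class ha hb hgcd u.2 with ⟨i, hi, hu⟩ | ⟨z, j, hj, hz, hu⟩ | hu <;>
    rcases vertex_class ha hb hgcd v.2 with ⟨i', hi', hv⟩ | ⟨z', j', hj', hz', hv⟩ | hv <;>
    rw [hu, hv] at hA hB hC ⊢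
  · -- pair / pair
    rw [sdist_P_P ha hb hgcd (Nat.zero_le _) hi, sdist_P_P ha hb hgcd (Nat.zero_le _) hi'] at hA
    have : i - 0 = i' - 0 := by exact_mod_cast hA
    have : i = i' := by omega
    rw [this]
  · -- pair / singleton : contradiction via v11 coordinate
    exfalso
    rw [sdist_S1_P ha hb hgcd hi] at hC
    by_cases hz1 : z' = 1
    · subst hz1
      rw [sdist_self] at hC
      have := coe_int_inj hC
      omega
    · rw [sdist_single_single' (by omega : (1:ℕ) ≠ z')] at hC
      exact absurd hC (by simp)
  · -- pair / zero
    exfalso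
    rw [sdist_S1_P ha hb hgcd hi, sdist_single_zero'] at hC
    have := coe_int_inj hC
    omega
  · -- singleton / pair
    exfalso
    rw [sdist_S1_P ha hb hgcd hi'] at hC
    by_cases hz1 : z = 1
    · subst hz1
      rw [sdist_self] at hC
      have := coe_int_inj hC.symm
      omega
    · rw [sdist_single_single' (by omega : (1:ℕ) ≠ z)] at hC
      exact absurd hC.symm (by simp)
  · -- singleton / singleton
    rw [sdist_P0_single ha hb hgcd hj hz, sdist_P0_single ha hb hgcd hj' hz'] at hA
    have hocc : occ a b z + 1 = occ a b z' + 1 := by exact_mod_cast hA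
    have hocc : occ a b z = occ a b z' := by omega
    rcases occ_eq_cases ha hb hgcd hz hj hz' hj' hocc with rfl | ⟨hz2, hz2'⟩
    · rfl
    · simp only [Multiset.insert_eq_cons, Multiset.mem_cons, Multiset.mem_singleton] at hz2 hz2'
      rcases hz2 with hza | hzb <;> rcases hz2' with hza' | hzb'
      · rw [hza, hza']
      · exfalso
        have e1 : sdist HatsMove ({b} : Multiset ℕ) ({z} : Multiset ℕ) = ⊤ := by
          rw [hza]; exact sdist_single_single' (by omega)
        have e2 : sdist HatsMove ({b} : Multiset ℕ) ({z'} : Multiset ℕ) = ((0:ℤ) : WithTop ℤ) := by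
          rw [hzb']; exact sdist_self
        rw [e1, e2] at hB
        exact absurd hB (by simp)
      · exfalso
        have e1 : sdist HatsMove ({b} : Multiset ℕ) ({z'} : Multiset ℕ) = ⊤ := by
          rw [hza']; exact sdist_single_single' (by omega)
        have e2 : sdist HatsMove ({b} : Multiset ℕ) ({z} : Multiset ℕ) = ((0:ℤ) : WithTop ℤ) := by
          rw [hzb]; exact sdist_self
        rw [e1, e2] at hB
        exact absurd hB (by simp)
      · rw [hzb, hzb']
  · -- singleton / zero
    exfalso
    rw [sdist_single_zero'] at hC
    by_cases hz1 : z = 1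
    · subst hz1
      rw [sdist_self] at hC
      have := coe_int_inj hC
      omega
    · rw [sdist_single_single' (by omega : (1:ℕ) ≠ z)] at hC
      exact absurd hC (by simp)
  · -- zero / pair
    exfalso
    rw [sdist_S1_P ha hb hgcd hi', sdist_single_zero'] at hC
    have := coe_int_inj hC
    omega
  · -- zero / singleton
    exfalso
    rw [sdist_single_zero'] at hC
    by_cases hz1 : z' = 1
    · subst hz1
      rw [sdist_self] at hC
      have := coe_int_inj hC
      omega
    · rw [sdist_single_single' (by omega : (1:ℕ) ≠ z')] at hC
      exact absurd hC.symm (by simp)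

end Upper

section Lower
set_option linter.unusedSectionVars false

variable {a b : ℕ} (ha : 2 ≤ a) (hb : a + 2 ≤ b) (hgcd : Nat.gcd a b = 1)
include ha hb hgcd

lemma x1_eq : (ch a b 1).1 = min a (b - a) := by
  have h : ch a b 1 = nx (a, b) := ch_succ 0
  unfold nx at h
  rw [if_pos (by omega : (a, b).1 < (a, b).2)] at h
  rw [h]

lemma two_ne_abc (hcII : ss1 a b < NN a b - 1) : 2 ≠ a ∧ 2 ≠ b ∧ 2 ≠ b - a := by
  refine ⟨?_, by omega, ?_⟩
  · intro h2a
    have hx0 : (ch a b 0).1 = 2 := by rw [ch_zero]; omega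
    have := two_x ha hb hgcd hx0
    omega
  · intro h2c
    have ha3 : 3 ≤ a := by
      rcases Nat.lt_or_ge a 3 with h' | h'
      · exfalso
        have ha2 : a = 2 := by omega
        have hb4 : b = 4 := by omega
        rw [ha2, hb4] at hgcd
        norm_num at hgcd
      · exact h'
    have hx1 : (ch a b 1).1 = 2 := by
      rw [x1_eq ha hb hgcd]
      omega
    have := two_x ha hb hgcd hx1
    omega

lemma pairX_I (hcI : ss1 a b = NN a b - 1) (s : HatsV a b)
    (h0 : s.1 ≠ 0) (h1 : s.1 ≠ {1}) (hN : s.1 ≠ MM a b (NN a b)) :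
    sdist HatsMove s.1 {1} = sdist HatsMove s.1 (MM a b (NN a b)) := by
  have hN2 := NN_ge2 ha hb hgcd
  rcases vertex_class ha hb hgcd s.2 with ⟨i, hi, ht⟩ | ⟨z, j, hj, hz, ht⟩ | ht
  · have hiN : i < NN a b := by
      rcases eq_or_lt_of_le hi with rfl | h'
      · exact absurd ht hN
      · exact h'
    rw [ht, sdist_P_single_1 ha hb hgcd hi, sdist_P_P ha hb hgcd hi le_rfl]
    have : max i (ss1 a b) - i + 1 = NN a b - i := by
      rcases Nat.le_total i (ss1 a b) with h' | h'
      · rw [max_eq_right h']; omega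
      · rw [max_eq_left h']; omega
    rw [this]
  · have hz1 : z ≠ 1 := by
      intro h'
      rw [h'] at ht
      exact h1 ht
    rw [ht, sdist_single_single' hz1, sdist_single_PN ha hb hgcd hz1]
  · exact absurd ht h0

lemma pairX_II (hcII : ss1 a b < NN a b - 1) (s : HatsV a b)
    (h0 : s.1 ≠ 0) (h1 : s.1 ≠ {1}) (h2 : s.1 ≠ {2}) (hN : s.1 ≠ MM a b (NN a b)) :
    sdist HatsMove s.1 {2} = sdist HatsMove s.1 (MM a b (NN a b)) := by
  have hN2 := NN_ge2 ha hb hgcd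
  rcases vertex_class ha hb hgcd s.2 with ⟨i, hi, ht⟩ | ⟨z, j, hj, hz, ht⟩ | ht
  · have hiN : i < NN a b := by
      rcases eq_or_lt_of_le hi with rfl | h'
      · exact absurd ht hN
      · exact h'
    rw [ht, sdist_P_single_2 ha hb hgcd hcII (by omega), sdist_P_P ha hb hgcd hi le_rfl]
  · have hz1 : z ≠ 1 := by
      intro h'; rw [h'] at ht; exact h1 ht
    have hz2 : z ≠ 2 := by
      intro h'; rw [h'] at ht; exact h2 ht
    rw [ht, sdist_single_single' hz2, sdist_single_PN ha hb hgcd hz1]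
  · exact absurd ht h0

lemma landmark_const (s : HatsV a b)
    (hU : s.1 = 0 ∨ s.1 = {1} ∨ (s.1 = {2} ∧ ss1 a b < NN a b - 1) ∨ s.1 = MM a b (NN a b)) :
    ∃ c, sdist HatsMove s.1 {a} = c ∧ sdist HatsMove s.1 {b} = c ∧
      sdist HatsMove s.1 {b - a} = c := by
  rcases hU with h | h | ⟨h, hcII⟩ | h <;> rw [h]
  · exact ⟨_, sdist_zero_single' a, sdist_zero_single' b, sdist_zero_single' (b - a)⟩
  · exact ⟨⊤, sdist_single_single' (by omega), sdist_single_single' (by omega),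
      sdist_single_single' (by omega)⟩
  · obtain ⟨q1, q2, q3⟩ := two_ne_abc ha hb hgcd hcII
    exact ⟨⊤, sdist_single_single' q1, sdist_single_single' q2, sdist_single_single' q3⟩
  · exact ⟨⊤, sdist_PN_single ha hb hgcd (by omega), sdist_PN_single ha hb hgcd (by omega),
      sdist_PN_single ha hb hgcd (by omega)⟩

lemma nodist_three (t : HatsV a b)
    (h1 : sdist HatsMove t.1 {a} ≠ sdist HatsMove t.1 {b})
    (h2 : sdist HatsMove t.1 {a} ≠ sdist HatsMove t.1 {b - a})
    (h3 : sdist HatsMove t.1 {b - a} ≠ sdist HatsMove t.1 {b}) : False := by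
  have hab : a ≠ b := by omega
  have hac : a ≠ b - a := a_ne_b' ha hb hgcd
  have hcb : b - a ≠ b := by omega
  rcases vertex_class ha hb hgcd t.2 with ⟨i, hi, ht⟩ | ⟨z, j, hj, hz, ht⟩ | ht <;>
    rw [ht] at h1 h2 h3
  · by_cases hi0 : i = 0
    · subst hi0
      refine h1 ?_
      rw [sdist_P_single_mem ha hb hgcd hi (by rw [MM_zero]; simp),
        sdist_P_single_mem ha hb hgcd hi (by rw [MM_zero]; simp)]
    · by_cases hi1 : i = 1
      · subst hi1
        refine h2 ?_
        rw [sdist_P_single_mem ha hb hgcd hi (by rw [MM_one ha hb hgcd]; simp),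
          sdist_P_single_mem ha hb hgcd hi (by rw [MM_one ha hb hgcd]; simp)]
      · have hi2 : 2 ≤ i := by omega
        have hbtop : sdist HatsMove (MM a b i) {b} = ⊤ := by
          refine sdist_P_single_top ha hb hgcd hi ?_
          intro j hj1 hj2 hmem
          have := bound_b ha hb hgcd (by omega) hmem
          omega
        rcases Nat.lt_or_ge a (b - a) with hlt | hge
        · refine h3 ?_
          rw [hbtop]
          refine sdist_P_single_top ha hb hgcd hi ?_
          intro j hj1 hj2 hmem
          have := bound_c ha hb hgcd (by omega) hmem
          rw [max_eq_right (by omega)] at this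
          omega
        · have hgt : b - a < a := by omega
          refine h1 ?_
          rw [hbtop]
          refine sdist_P_single_top ha hb hgcd hi ?_
          intro j hj1 hj2 hmem
          have := bound_c ha hb hgcd (by omega) hmem
          rw [max_eq_left (by omega)] at this
          omega
  · by_cases hza : z = a
    · rw [hza] at h3
      refine h3 ?_
      rw [sdist_single_single' hac, sdist_single_single' hab]
    · by_cases hzb : z = b
      · rw [hzb] at h2
        refine h2 ?_
        rw [sdist_single_single' (Ne.symm hab), sdist_single_single' (Ne.symm hcb)]
      · by_cases hzc : z = b - a
        · rw [hzc] at h1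
          refine h1 ?_
          rw [sdist_single_single' (Ne.symm hac), sdist_single_single' hcb]
        · refine h1 ?_
          rw [sdist_single_single' hza, sdist_single_single' hzb]
  · refine h1 ?_
    rw [sdist_zero_single', sdist_zero_single']

end Lower

section Final

lemma resolves_mono {V : Type*} {R : V → V → Prop} {S T : Set V} (hST : S ⊆ T)
    (h : Resolves R S) : Resolves R T := fun u v hall => h u v fun s hs => hall s (hST hs)

variable {a b : ℕ} (ha : 2 ≤ a) (hb : a + 2 ≤ b) (hgcd : Nat.gcd a b = 1)
include ha hb hgcd

lemma no_two_resolves (S : Finset (HatsV a b)) (hS : S.card = 2) :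
    ¬ Resolves (hatsR a b) ↑S := by
  classical
  intro hres
  obtain ⟨u, v, huv, rfl⟩ := Finset.card_eq_two.1 hS
  have hmem : ∀ s : HatsV a b,
      s ∈ (↑({u, v} : Finset (HatsV a b)) : Set (HatsV a b)) ↔ (s = u ∨ s = v) := by
    intro s; simp
  have hN2 := NN_ge2 ha hb hgcd
  have h1mem : (1:ℕ) ∈ MM a b (NN a b) := by rw [MM_stab ha hb hgcd le_rfl]; simp
  let vN : HatsV a b := ⟨MM a b (NN a b), reach_MM ha hb hgcd le_rfl⟩
  let v1 : HatsV a b := ⟨{1}, reach_single ha hb hgcd le_rfl h1mem⟩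
  let va : HatsV a b := ⟨{a}, reach_single ha hb hgcd (Nat.zero_le _) (by rw [MM_zero]; simp)⟩
  let vb : HatsV a b := ⟨{b}, reach_single ha hb hgcd (Nat.zero_le _) (by rw [MM_zero]; simp)⟩
  let vc : HatsV a b := ⟨{b - a},
    reach_single ha hb hgcd (by omega : 1 ≤ NN a b) (by rw [MM_one ha hb hgcd]; simp)⟩
  have key : ∀ x y : HatsV a b, x ≠ y →
      sdist (hatsR a b) u x = sdist (hatsR a b) u y →
      sdist (hatsR a b) v x ≠ sdist (hatsR a b) v y := by
    intro x y hxy hu hv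
    refine hxy (hres x y ?_)
    intro s hs
    rcases (hmem s).1 hs with rfl | rfl
    · exact hu
    · exact hv
  have keyV : ∀ x y : HatsV a b, x ≠ y →
      sdist (hatsR a b) v x = sdist (hatsR a b) v y →
      sdist (hatsR a b) u x ≠ sdist (hatsR a b) u y := by
    intro x y hxy hv hu
    refine hxy (hres x y ?_)
    intro s hs
    rcases (hmem s).1 hs with rfl | rfl
    · exact hu
    · exact hv
  have hss := ss1_le ha hb hgcd
  have hdisj : ∃ s₀ : HatsV a b, (s₀ = u ∨ s₀ = v) ∧
      (s₀.1 = 0 ∨ s₀.1 = {1} ∨ (s₀.1 = ({2} : Multiset ℕ) ∧ ss1 a b < NN a b - 1) ∨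
        s₀.1 = MM a b (NN a b)) := by
    rcases eq_or_lt_of_le hss with hcI | hcII
    · have hne : v1 ≠ vN := by
        intro h
        have h' : ({1} : Multiset ℕ) = MM a b (NN a b) := congrArg Subtype.val h
        have hc := congrArg Multiset.card h'
        rw [card_MM] at hc
        simp at hc
      by_cases hu' : sdist (hatsR a b) u v1 = sdist (hatsR a b) u vN
      · have hv' := key v1 vN hne hu'
        refine ⟨v, Or.inr rfl, ?_⟩
        by_contra hX
        push_neg at hX
        obtain ⟨hX0, hX1, hX2, hXN⟩ := hX
        refine hv' ?_
        rw [sdist_hatsR, sdist_hatsR]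
        exact pairX_I ha hb hgcd hcI v hX0 hX1 hXN
      · refine ⟨u, Or.inl rfl, ?_⟩
        by_contra hX
        push_neg at hX
        obtain ⟨hX0, hX1, hX2, hXN⟩ := hX
        refine hu' ?_
        rw [sdist_hatsR, sdist_hatsR]
        exact pairX_I ha hb hgcd hcI u hX0 hX1 hXN
    · let v2 : HatsV a b := ⟨({2} : Multiset ℕ),
        reach_single ha hb hgcd (by omega : NN a b - 1 ≤ NN a b)
          ((two_mem_iff ha hb hgcd hcII).2 rfl)⟩
      have hne : v2 ≠ vN := by
        intro h
        have h' : ({2} : Multiset ℕ) = MM a b (NN a b) := congrArg Subtype.val h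
        have hc := congrArg Multiset.card h'
        rw [card_MM] at hc
        simp at hc
      by_cases hu' : sdist (hatsR a b) u v2 = sdist (hatsR a b) u vN
      · have hv' := key v2 vN hne hu'
        refine ⟨v, Or.inr rfl, ?_⟩
        by_contra hX
        push_neg at hX
        obtain ⟨hX0, hX1, hX2, hXN⟩ := hX
        refine hv' ?_
        rw [sdist_hatsR, sdist_hatsR]
        exact pairX_II ha hb hgcd hcII v hX0 hX1 (fun h2 => absurd (hX2 h2) (by omega)) hXN
      · refine ⟨u, Or.inl rfl, ?_⟩
        by_contra hX
        push_neg at hX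
        obtain ⟨hX0, hX1, hX2, hXN⟩ := hX
        refine hu' ?_
        rw [sdist_hatsR, sdist_hatsR]
        exact pairX_II ha hb hgcd hcII u hX0 hX1 (fun h2 => absurd (hX2 h2) (by omega)) hXN
  obtain ⟨s₀, hs₀uv, hs₀X⟩ := hdisj
  obtain ⟨c, hc1, hc2, hc3⟩ := landmark_const ha hb hgcd s₀ hs₀X
  have hnab : va ≠ vb := by
    intro h
    have h' : ({a} : Multiset ℕ) = {b} := congrArg Subtype.val h
    rw [Multiset.singleton_inj] at h'
    omega
  have hnac : va ≠ vc := by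
    intro h
    have h' : ({a} : Multiset ℕ) = {b - a} := congrArg Subtype.val h
    rw [Multiset.singleton_inj] at h'
    exact a_ne_b' ha hb hgcd h'
  have hncb : vc ≠ vb := by
    intro h
    have h' : ({b - a} : Multiset ℕ) = {b} := congrArg Subtype.val h
    rw [Multiset.singleton_inj] at h'
    omega
  have heq1 : sdist (hatsR a b) s₀ va = sdist (hatsR a b) s₀ vb := by
    rw [sdist_hatsR, sdist_hatsR]
    show sdist HatsMove s₀.1 {a} = sdist HatsMove s₀.1 {b}
    rw [hc1, hc2]
  have heq2 : sdist (hatsR a b) s₀ va = sdist (hatsR a b) s₀ vc := by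
    rw [sdist_hatsR, sdist_hatsR]
    show sdist HatsMove s₀.1 {a} = sdist HatsMove s₀.1 {b - a}
    rw [hc1, hc3]
  have heq3 : sdist (hatsR a b) s₀ vc = sdist (hatsR a b) s₀ vb := by
    rw [sdist_hatsR, sdist_hatsR]
    show sdist HatsMove s₀.1 {b - a} = sdist HatsMove s₀.1 {b}
    rw [hc3, hc2]
  rcases hs₀uv with rfl | rfl
  · have h1 := key va vb hnab heq1
    have h2 := key va vc hnac heq2
    have h3 := key vc vb hncb heq3
    rw [sdist_hatsR, sdist_hatsR] at h1 h2 h3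
    exact nodist_three ha hb hgcd v h1 h2 h3
  · have h1 := keyV va vb hnab heq1
    have h2 := keyV va vc hnac heq2
    have h3 := keyV vc vb hncb heq3
    rw [sdist_hatsR, sdist_hatsR] at h1 h2 h3
    exact nodist_three ha hb hgcd u h1 h2 h3

end Final

/-- if `a ≥ 2`, `b ≥ a + 2` and `gcd(a,b) = 1`, then `G(hats,{a,b})`
has metric dimension 3 w.r.t. signed distance; in particular no set of two vertices
resolves it. -/
theorem stmt10 (a b : ℕ) (ha : 2 ≤ a) (hb : a + 2 ≤ b) (hgcd : Nat.gcd a b = 1) :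
    metricDim (hatsR a b) = 3 ∧
    (∀ S : Finset (HatsV a b), S.card = 2 → ¬ Resolves (hatsR a b) ↑S) := by
  classical
  have hN2 := NN_ge2 ha hb hgcd
  have h1mem : (1:ℕ) ∈ MM a b (NN a b) := by rw [MM_stab ha hb hgcd le_rfl]; simp
  let v0 : HatsV a b := ⟨{a, b}, Relation.ReflTransGen.refl⟩
  let vb1 : HatsV a b := ⟨{b}, reach_single ha hb hgcd (Nat.zero_le _) (by rw [MM_zero]; simp)⟩
  let v11 : HatsV a b := ⟨{1}, reach_single ha hb hgcd le_rfl h1mem⟩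
  have hne01 : v0 ≠ vb1 := by
    intro h
    have h' : ({a, b} : Multiset ℕ) = {b} := congrArg Subtype.val h
    have hc := congrArg Multiset.card h'
    rw [card_pair] at hc
    simp at hc
  have hne02 : v0 ≠ v11 := by
    intro h
    have h' : ({a, b} : Multiset ℕ) = {1} := congrArg Subtype.val h
    have hc := congrArg Multiset.card h'
    rw [card_pair] at hc
    simp at hc
  have hne12 : vb1 ≠ v11 := by
    intro h
    have h' : ({b} : Multiset ℕ) = {1} := congrArg Subtype.val h
    rw [Multiset.singleton_inj] at h'
    omega
  have hres3 : Resolves (hatsR a b) ↑({v0, vb1, v11} : Finset (HatsV a b)) := by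
    have hcoe : (↑({v0, vb1, v11} : Finset (HatsV a b)) : Set (HatsV a b)) =
        ({v0, vb1, v11} : Set (HatsV a b)) := by simp
    rw [hcoe]
    exact upper_resolves ha hb hgcd rfl rfl rfl
  have hcard3 : ({v0, vb1, v11} : Finset (HatsV a b)).card = 3 :=
    Finset.card_eq_three.2 ⟨v0, vb1, v11, hne01, hne02, hne12, rfl⟩
  have hlow := no_two_resolves ha hb hgcd
  refine ⟨?_, hlow⟩
  have hmem3 : 3 ∈ {k : ℕ | ∃ S : Finset (HatsV a b), S.card = k ∧ Resolves (hatsR a b) ↑S} :=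
    ⟨{v0, vb1, v11}, hcard3, hres3⟩
  refine le_antisymm (Nat.sInf_le hmem3) ?_
  refine le_csInf ⟨3, hmem3⟩ ?_
  rintro k ⟨S, hcard, hres⟩
  by_contra hk
  push_neg at hk
  interval_cases k
  · -- k = 0 : empty set resolves, extend to 2
    have hS0 : S = ∅ := Finset.card_eq_zero.1 hcard
    refine hlow {v0, v11} ?_ ?_
    · rw [Finset.card_insert_of_notMem (by simp [hne02]), Finset.card_singleton]
    · refine resolves_mono ?_ hres
      rw [hS0]
      simp
  · -- k = 1
    obtain ⟨w, rfl⟩ := Finset.card_eq_one.1 hcard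
    by_cases hw : w = v0
    · refine hlow {v11, w} ?_ ?_
      · rw [Finset.card_insert_of_notMem (by simp [hw, Ne.symm hne02]), Finset.card_singleton]
      · refine resolves_mono ?_ hres
        intro s hs
        simp at hs ⊢
        exact Or.inr hs
    · refine hlow {v0, w} ?_ ?_
      · rw [Finset.card_insert_of_notMem (by simp [Ne.symm hw]), Finset.card_singleton]
      · refine resolves_mono ?_ hres
        intro s hs
        simp at hs ⊢
        exact Or.inr hs
  · -- k = 2
    exact hlow S hcard hres
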